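/- arXiv:1704.03514 — 4 statements merged into one kernel-verified Lean document; each statement's English description precedes it below -/
import Mathlib

section
/- Let S : ℝ → ℝ be continuous and monotone nondecreasing, and suppose f : ℝ → ℝ is such that for every t₀ in an interval [a,b] on which S is not locally constant at any point, the F^α-derivative D_F^α f(t₀) exists and equals 0 (i.e., lim_{t→t₀} (f(t)−f(t₀))/(S(t)−S(t₀)) = 0 along points with S(t) ≠ S(t₀)), and f is continuous on [a,b] and constant on any interval where S is constant. Then f is constant on [a,b]. -/
/-!
For every `ε > 0` and `x ≤ y` one has `|f y - f x| ≤ ε (S y - S x)`: the set of `y` where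
this holds is closed and, by the vanishing `F^α`-derivative (or, where `S` is flat, by the
constancy of `f`), it extends a little to the right of each of its points, so it is all of
`[x, b]`. Letting `ε → 0` gives `f y = f x`.
-/

open Set Filter Topology

/-- `S` is not locally constant at `t₀`. -/
def NotLocallyConstantAt (S : ℝ → ℝ) (t₀ : ℝ) : Prop :=
  ∀ δ > 0, ∃ t, |t - t₀| < δ ∧ S t ≠ S t₀

/-- The `F^α`-derivative of `f` at `t₀` with respect to the staircase function `S` equals `L`:
the limit of the difference quotient taken along points where `S t ≠ S t₀`. -/
def FDerivAtS (S f : ℝ → ℝ) (t₀ L : ℝ) : Prop :=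
  Filter.Tendsto (fun t => (f t - f t₀) / (S t - S t₀))
    (nhdsWithin t₀ {t | S t ≠ S t₀}) (nhds L)

variable {S f : ℝ → ℝ} {x ε : ℝ}

theorem FDerivAtS.eventually_abs_sub_le (hd : FDerivAtS S f x 0) (hε : 0 < ε) :
    ∀ᶠ t in 𝓝 x, S t ≠ S x → |f t - f x| ≤ ε * |S t - S x| := by
  have hsmall := hd.abs.eventually_lt_const (by simpa using hε)
  filter_upwards [eventually_nhdsWithin_iff.mp hsmall] with t ht hSt
  have hpos : 0 < |S t - S x| := abs_pos.mpr (sub_ne_zero.mpr hSt)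
  have hq := (ht hSt).le
  rwa [abs_div, div_le_iff₀ hpos] at hq

theorem FDerivAtS.eventually_abs_sub_le_mul_right (hmono : Monotone S)
    (hd : FDerivAtS S f x 0)
    (hconst : ∀ᶠ t in 𝓝[>] x, (∀ z ∈ Icc x t, S z = S x) → f t = f x) (hε : 0 < ε) :
    ∀ᶠ t in 𝓝[>] x, |f t - f x| ≤ ε * (S t - S x) := by
  filter_upwards [nhdsWithin_le_nhds (hd.eventually_abs_sub_le hε), hconst,
    self_mem_nhdsWithin] with t hbound hflat (hxt : x < t)
  by_cases hSt : S t = S x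
  · rw [hflat fun z hz => le_antisymm (hSt ▸ hmono hz.2) (hmono hz.1), hSt]
    simp
  · simpa [abs_of_nonneg (sub_nonneg.2 (hmono hxt.le))] using hbound hSt

theorem abs_sub_le_sub_of_eventually_right {G : ℝ → ℝ} {b : ℝ}
    (hf : ContinuousOn f (Icc x b)) (hG : ContinuousOn G (Icc x b))
    (hloc : ∀ x' ∈ Ico x b, ∀ᶠ t in 𝓝[>] x', |f t - f x'| ≤ G t - G x') :
    ∀ y ∈ Icc x b, |f y - f x| ≤ G y - G x := by
  set s := {z | |f z - f x| ≤ G z - G x}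
  have hclosed : IsClosed (s ∩ Icc x b) := by
    have hg : ContinuousOn (fun z => |f z - f x| - (G z - G x)) (Icc x b) :=
      ((hf.sub continuousOn_const).abs).sub (hG.sub continuousOn_const)
    convert hg.preimage_isClosed_of_isClosed isClosed_Icc (isClosed_Iic (a := 0)) using 1
    ext z
    simp [s, and_comm]
  refine hclosed.Icc_subset_of_forall_mem_nhdsWithin (by simp [s]) fun x' ⟨hx's, hx'⟩ => ?_
  filter_upwards [hloc x' hx'] with t ht
  calc |f t - f x| ≤ |f t - f x'| + |f x' - f x| := abs_sub_le _ _ _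
    _ ≤ (G t - G x') + (G x' - G x) := add_le_add ht hx's
    _ = G t - G x := by ring

theorem eq_zero_of_abs_le_forall_pos_mul {u c : ℝ} (h : ∀ ε > 0, |u| ≤ ε * c) : u = 0 := by
  have hlim : Tendsto (fun ε => ε * c) (𝓝[>] 0) (𝓝 0) := by
    simpa using (tendsto_id (x := 𝓝 (0 : ℝ))).mul_const c |>.mono_left nhdsWithin_le_nhds
  exact abs_nonpos_iff.mp (ge_of_tendsto hlim (eventually_nhdsWithin_of_forall h))

theorem fderiv_zero_imp_const_general (S f : ℝ → ℝ) (hS : Continuous S) (hmono : Monotone S)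
    (a b : ℝ)
    (hf : ContinuousOn f (Set.Icc a b))
    (hconst : ∀ s u, Set.Icc s u ⊆ Set.Icc a b →
      (∀ x ∈ Set.Icc s u, S x = S s) → ∀ x ∈ Set.Icc s u, f x = f s)
    (hderiv : ∀ t₀ ∈ Set.Icc a b, FDerivAtS S f t₀ 0) :
    ∀ x ∈ Set.Icc a b, ∀ y ∈ Set.Icc a b, f x = f y := by
  have hloc : ∀ ε > 0, ∀ x' ∈ Ico a b, ∀ᶠ t in 𝓝[>] x', |f t - f x'| ≤ ε * (S t - S x') := by
    intro ε hε x' hx'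
    refine (hderiv x' (Ico_subset_Icc_self hx')).eventually_abs_sub_le_mul_right hmono ?_ hε
    filter_upwards [Ioo_mem_nhdsGT hx'.2] with t ht hflat
    exact hconst x' t (Icc_subset_Icc hx'.1 ht.2.le) hflat t ⟨ht.1.le, le_rfl⟩
  have of_le : ∀ x ∈ Icc a b, ∀ y ∈ Icc a b, x ≤ y → f x = f y := by
    intro x hx y hy hxy
    have hsub : Icc x b ⊆ Icc a b := Icc_subset_Icc_left hx.1
    refine (sub_eq_zero.mp (eq_zero_of_abs_le_forall_pos_mul (c := S y - S x) ?_)).symm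
    intro ε hε
    simpa [mul_sub] using abs_sub_le_sub_of_eventually_right (hf.mono hsub)
      (continuousOn_const.mul hS.continuousOn)
      (fun x' hx' => by simpa [mul_sub] using hloc ε hε x' ⟨hx.1.trans hx'.1, hx'.2⟩)
      y ⟨hxy, hy.2⟩
  intro x hx y hy
  rcases le_total x y with hxy | hyx
  · exact of_le x hx y hy hxy
  · exact (of_le y hy x hx hyx).symm

theorem fderiv_zero_imp_const (S f : ℝ → ℝ) (hS : Continuous S) (hmono : Monotone S)
    (a b : ℝ) (hab : a ≤ b)
    (hne : ∀ t₀ ∈ Set.Icc a b, NotLocallyConstantAt S t₀)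
    (hf : ContinuousOn f (Set.Icc a b))
    (hconst : ∀ s u, Set.Icc s u ⊆ Set.Icc a b →
      (∀ x ∈ Set.Icc s u, S x = S s) → ∀ x ∈ Set.Icc s u, f x = f s)
    (hderiv : ∀ t₀ ∈ Set.Icc a b, FDerivAtS S f t₀ 0) :
    ∀ x ∈ Set.Icc a b, ∀ y ∈ Set.Icc a b, f x = f y :=
  fderiv_zero_imp_const_general S f hS hmono a b hf hconst hderiv
end

section
/- Let S : ℝ → ℝ be continuous and monotone nondecreasing, f : ℝ → ℝ continuous and bounded on [a,b], and define g(t) = ∫_a^t f dS (Riemann–Stieltjes integral with respect to S). Then at every t₀ ∈ (a,b) where S is not locally constant, the F^α-derivative of g at t₀ exists and equals f(t₀), i.e., lim_{t→t₀} (g(t)−g(t₀))/(S(t)−S(t₀)) = f(t₀) along points with S(t) ≠ S(t₀). -/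
/-- `I` is the Riemann–Stieltjes integral of `f` with respect to `S` over `[a,b]`. -/
def IsRSIntegral (S f : ℝ → ℝ) (a b I : ℝ) : Prop :=
  ∀ ε > 0, ∃ δ > 0, ∀ (n : ℕ) (t τ : ℕ → ℝ),
    0 < n → t 0 = a → t n = b →
    (∀ i < n, t i ≤ t (i + 1)) → (∀ i < n, t (i + 1) - t i < δ) →
    (∀ i < n, τ i ∈ Set.Icc (t i) (t (i + 1))) →
    |(∑ i ∈ Finset.range n, f (τ i) * (S (t (i + 1)) - S (t i))) - I| < ε

/-!
Concatenating fine partitions of `[a, c]` and `[c, d]` shows that `g d - g c` is approximated by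
Riemann–Stieltjes sums over `[c, d]`. As `S` is nondecreasing, such a sum differs from
`f t₀ * (S d - S c)` by at most `sup_{[c, d]} |f - f t₀| * (S d - S c)`; taking `{c, d} = {t, t₀}`,
continuity of `f` at `t₀` makes this `o(S t - S t₀)` as `t → t₀`.
-/

open Set Filter Topology Finset

noncomputable section

def leftRSSum (S f : ℝ → ℝ) (t : ℕ → ℝ) (n : ℕ) : ℝ :=
  ∑ i ∈ range n, f (t i) * (S (t (i + 1)) - S (t i))

def uniformPartition (a b : ℝ) (n i : ℕ) : ℝ :=
  a + i * ((b - a) / n)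

def concatPartition (p q : ℕ → ℝ) (n i : ℕ) : ℝ :=
  if i ≤ n then p i else q (i - n)

end

section UniformPartition

variable {a b : ℝ} {n i : ℕ}

@[simp]
lemma uniformPartition_zero : uniformPartition a b n 0 = a := by
  simp [uniformPartition]

lemma uniformPartition_self (hn : n ≠ 0) : uniformPartition a b n n = b := by
  simp only [uniformPartition]
  field_simp
  ring

lemma uniformPartition_succ_sub :
    uniformPartition a b n (i + 1) - uniformPartition a b n i = (b - a) / n := by
  simp only [uniformPartition]
  push_cast
  ring

lemma uniformPartition_le_succ (hab : a ≤ b) :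
    uniformPartition a b n i ≤ uniformPartition a b n (i + 1) :=
  sub_nonneg.1 <| uniformPartition_succ_sub ▸ div_nonneg (sub_nonneg.2 hab) n.cast_nonneg

lemma uniformPartition_mem_Icc (hab : a ≤ b) (hi : i ≤ n) :
    uniformPartition a b n i ∈ Icc a b := by
  have hba : 0 ≤ b - a := sub_nonneg.2 hab
  have hin : (i : ℝ) / n ≤ 1 := div_le_one_of_le₀ (by exact_mod_cast hi) n.cast_nonneg
  have hstep : (i : ℝ) * ((b - a) / n) = (b - a) * (i / n) := by ring
  simp only [uniformPartition, Set.mem_Icc, hstep]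
  constructor
  · nlinarith [div_nonneg (Nat.cast_nonneg (α := ℝ) i) n.cast_nonneg]
  · nlinarith [mul_le_of_le_one_right hba hin]

lemma exists_pos_nat_div_lt (a b : ℝ) {δ : ℝ} (hδ : 0 < δ) :
    ∃ n : ℕ, 0 < n ∧ (b - a) / n < δ := by
  obtain ⟨n, hn⟩ := exists_nat_gt (max ((b - a) / δ) 0)
  have hn₀ : (0 : ℝ) < n := (le_max_right _ _).trans_lt hn
  refine ⟨n, by exact_mod_cast hn₀, ?_⟩
  rw [div_lt_iff₀ hn₀, ← div_lt_iff₀' hδ]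
  exact (le_max_left _ _).trans_lt hn

end UniformPartition

section ConcatPartition

variable {p q : ℕ → ℝ} {n m : ℕ}

lemma concatPartition_of_le {i : ℕ} (hi : i ≤ n) : concatPartition p q n i = p i :=
  if_pos hi

lemma concatPartition_add (hpq : p n = q 0) (j : ℕ) : concatPartition p q n (n + j) = q j := by
  rcases j with _ | j
  · simpa [concatPartition] using hpq
  · simp [concatPartition]

lemma concatPartition_step (R : ℝ → ℝ → Prop) (hpq : p n = q 0)
    (hp : ∀ i < n, R (p i) (p (i + 1))) (hq : ∀ j < m, R (q j) (q (j + 1))) :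
    ∀ i < n + m, R (concatPartition p q n i) (concatPartition p q n (i + 1)) := by
  intro i hi
  rcases lt_or_ge i n with hin | hni
  · rw [concatPartition_of_le hin.le, concatPartition_of_le hin]
    exact hp i hin
  · obtain ⟨j, rfl⟩ := Nat.exists_eq_add_of_le hni
    rw [add_assoc, concatPartition_add hpq, concatPartition_add hpq]
    exact hq j (by omega)

lemma leftRSSum_concatPartition (S f : ℝ → ℝ) (hpq : p n = q 0) :
    leftRSSum S f (concatPartition p q n) (n + m) = leftRSSum S f p n + leftRSSum S f q m := by
  simp only [leftRSSum, sum_range_add]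
  congr 1
  · refine sum_congr rfl fun i hi => ?_
    have hi : i < n := Finset.mem_range.1 hi
    rw [concatPartition_of_le hi.le, concatPartition_of_le hi]
  · refine sum_congr rfl fun j _ => ?_
    rw [add_assoc, concatPartition_add hpq, concatPartition_add hpq]

end ConcatPartition

lemma abs_leftRSSum_sub_mul_le {S f : ℝ → ℝ} {t : ℕ → ℝ} {n : ℕ} {K ε : ℝ} (hS : Monotone S)
    (ht : ∀ i < n, t i ≤ t (i + 1)) (hf : ∀ i < n, |f (t i) - K| ≤ ε) :
    |leftRSSum S f t n - K * (S (t n) - S (t 0))| ≤ ε * (S (t n) - S (t 0)) := by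
  rw [← sum_range_sub (fun i => S (t i)), leftRSSum, mul_sum, mul_sum, ← sum_sub_distrib]
  refine (abs_sum_le_sum_abs _ _).trans (sum_le_sum fun i hi => ?_)
  have hi : i < n := Finset.mem_range.1 hi
  have hΔ : 0 ≤ S (t (i + 1)) - S (t i) := sub_nonneg.2 (hS (ht i hi))
  rw [← sub_mul, abs_mul, abs_of_nonneg hΔ]
  exact mul_le_mul_of_nonneg_right (hf i hi) hΔ

namespace IsRSIntegral

variable {S f : ℝ → ℝ} {a c d Ic Id : ℝ}

lemma exists_abs_leftRSSum_sub_lt {b I : ℝ} (hI : IsRSIntegral S f a b I) {ε : ℝ} (hε : 0 < ε) :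
    ∃ δ > 0, ∀ (n : ℕ) (t : ℕ → ℝ), 0 < n → t 0 = a → t n = b →
      (∀ i < n, t i ≤ t (i + 1)) → (∀ i < n, t (i + 1) - t i < δ) →
      |leftRSSum S f t n - I| < ε := by
  obtain ⟨δ, hδ, H⟩ := hI ε hε
  exact ⟨δ, hδ, fun n t hn ht₀ htn hmono hmesh =>
    H n t t hn ht₀ htn hmono hmesh fun i hi => ⟨le_rfl, hmono i hi⟩⟩

lemma exists_abs_leftRSSum_uniformPartition_sub_lt (hc : IsRSIntegral S f a c Ic)
    (hd : IsRSIntegral S f a d Id) (hac : a ≤ c) (hcd : c ≤ d) {η : ℝ} (hη : 0 < η) :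
    ∃ m, 0 < m ∧ |leftRSSum S f (uniformPartition c d m) m - (Id - Ic)| < η := by
  obtain ⟨δ₁, hδ₁, H₁⟩ := hc.exists_abs_leftRSSum_sub_lt (half_pos hη)
  obtain ⟨δ₂, hδ₂, H₂⟩ := hd.exists_abs_leftRSSum_sub_lt (half_pos hη)
  set δ := min δ₁ δ₂
  obtain ⟨n, hn, hn_mesh⟩ := exists_pos_nat_div_lt a c (lt_min hδ₁ hδ₂ : 0 < δ)
  obtain ⟨m, hm, hm_mesh⟩ := exists_pos_nat_div_lt c d (lt_min hδ₁ hδ₂ : 0 < δ)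
  set p := uniformPartition a c n
  set q := uniformPartition c d m
  have hpq : p n = q 0 := by simp [p, q, uniformPartition_self hn.ne']
  have hqm : q m = d := uniformPartition_self hm.ne'
  have hp_mono : ∀ i < n, p i ≤ p (i + 1) := fun _ _ => uniformPartition_le_succ hac
  have hq_mono : ∀ j < m, q j ≤ q (j + 1) := fun _ _ => uniformPartition_le_succ hcd
  have hp_mesh : ∀ i < n, p (i + 1) - p i < δ := fun _ _ => uniformPartition_succ_sub ▸ hn_mesh
  have hq_mesh : ∀ j < m, q (j + 1) - q j < δ := fun _ _ => uniformPartition_succ_sub ▸ hm_mesh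
  have hsum_p : |leftRSSum S f p n - Ic| < η / 2 :=
    H₁ n p hn uniformPartition_zero (uniformPartition_self hn.ne') hp_mono
      fun i hi => (hp_mesh i hi).trans_le (min_le_left _ _)
  have hsum_pq : |leftRSSum S f p n + leftRSSum S f q m - Id| < η / 2 := by
    rw [← leftRSSum_concatPartition S f hpq]
    refine H₂ (n + m) _ (by omega) ?_ (by rw [concatPartition_add hpq, hqm])
      (concatPartition_step _ hpq hp_mono hq_mono) fun i hi =>
        (concatPartition_step (fun x y => y - x < δ) hpq hp_mesh hq_mesh i hi).trans_le
          (min_le_right _ _)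
    rw [concatPartition_of_le n.zero_le]
    exact uniformPartition_zero
  refine ⟨m, hm, ?_⟩
  calc |leftRSSum S f q m - (Id - Ic)|
      = |(leftRSSum S f p n + leftRSSum S f q m - Id) - (leftRSSum S f p n - Ic)| := by
        ring_nf
    _ ≤ |leftRSSum S f p n + leftRSSum S f q m - Id| + |leftRSSum S f p n - Ic| := abs_sub _ _
    _ < η / 2 + η / 2 := add_lt_add hsum_pq hsum_p
    _ = η := add_halves η

lemma abs_sub_sub_mul_le {K ε : ℝ} (hS : Monotone S) (hc : IsRSIntegral S f a c Ic)
    (hd : IsRSIntegral S f a d Id) (hac : a ≤ c) (hcd : c ≤ d)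
    (hfK : ∀ τ ∈ Icc c d, |f τ - K| ≤ ε) :
    |(Id - Ic) - K * (S d - S c)| ≤ ε * (S d - S c) := by
  refine le_of_forall_pos_le_add fun η hη => ?_
  obtain ⟨m, hm, hsum⟩ := hc.exists_abs_leftRSSum_uniformPartition_sub_lt hd hac hcd hη
  have hest := abs_leftRSSum_sub_mul_le (t := uniformPartition c d m) (n := m) hS
    (fun i _ => uniformPartition_le_succ hcd)
    fun i hi => hfK _ (uniformPartition_mem_Icc hcd hi.le)
  rw [uniformPartition_zero, uniformPartition_self hm.ne'] at hest
  calc |(Id - Ic) - K * (S d - S c)|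
      ≤ |(Id - Ic) - leftRSSum S f (uniformPartition c d m) m|
        + |leftRSSum S f (uniformPartition c d m) m - K * (S d - S c)| := abs_sub_le _ _ _
    _ ≤ η + ε * (S d - S c) := add_le_add (by rw [abs_sub_comm]; exact hsum.le) hest
    _ = ε * (S d - S c) + η := add_comm _ _

lemma abs_sub_sub_mul_le_of_uIcc {K ε : ℝ} (hS : Monotone S) (hc : IsRSIntegral S f a c Ic)
    (hd : IsRSIntegral S f a d Id) (hac : a ≤ c) (had : a ≤ d)
    (hfK : ∀ τ ∈ uIcc c d, |f τ - K| ≤ ε) :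
    |(Id - Ic) - K * (S d - S c)| ≤ ε * |S d - S c| := by
  rcases le_total c d with hcd | hdc
  · rw [abs_of_nonneg (sub_nonneg.2 (hS hcd))]
    exact hc.abs_sub_sub_mul_le hS hd hac hcd fun τ hτ => hfK τ (Icc_subset_uIcc hτ)
  · rw [abs_of_nonpos (sub_nonpos.2 (hS hdc)), ← abs_neg]
    convert hd.abs_sub_sub_mul_le hS hc had hdc fun τ hτ => hfK τ (Icc_subset_uIcc' hτ)
      using 1 <;> ring_nf

end IsRSIntegral

lemma abs_div_sub_le_of_abs_sub_mul_le {x y K ε : ℝ} (hy : y ≠ 0)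
    (h : |x - K * y| ≤ ε * |y|) : |x / y - K| ≤ ε := by
  rwa [div_sub' hy, abs_div, div_le_iff₀ (abs_pos.2 hy), mul_comm y]

theorem fundamental_theorem_second_part_general (S f g : ℝ → ℝ)
    (hmono : Monotone S) (a b : ℝ)
    (hf : ContinuousOn f (Set.Icc a b))
    (hg : ∀ t ∈ Set.Icc a b, IsRSIntegral S f a t (g t))
    (t₀ : ℝ) (ht₀ : t₀ ∈ Set.Ioo a b) :
    Filter.Tendsto (fun t => (g t - g t₀) / (S t - S t₀))
      (nhdsWithin t₀ {t | S t ≠ S t₀}) (nhds (f t₀)) := by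
  have hIcc : Icc a b ∈ 𝓝 t₀ := Icc_mem_nhds ht₀.1 ht₀.2
  have ht₀I : t₀ ∈ Icc a b := mem_of_mem_nhds hIcc
  refine Metric.nhds_basis_closedBall.tendsto_right_iff.2 fun ε hε => ?_
  have hfε : ∀ᶠ s in (𝓝 t₀).smallSets, ∀ τ ∈ s, |f τ - f t₀| ≤ ε :=
    eventually_smallSets_forall.2 <|
      (hf.continuousAt hIcc).eventually (Metric.closedBall_mem_nhds _ hε)
  have huIcc : Tendsto (fun t => uIcc t₀ t) (𝓝 t₀) (𝓝 t₀).smallSets :=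
    tendsto_const_nhds.uIcc tendsto_id
  filter_upwards [self_mem_nhdsWithin, nhdsWithin_le_nhds hIcc,
    nhdsWithin_le_nhds (huIcc.eventually hfε)] with t hSt htI hfτ
  exact abs_div_sub_le_of_abs_sub_mul_le (sub_ne_zero.2 hSt)
    ((hg t₀ ht₀I).abs_sub_sub_mul_le_of_uIcc hmono (hg t htI) ht₀I.1 htI.1 hfτ)

theorem fundamental_theorem_second_part (S f g : ℝ → ℝ)
    (hS : Continuous S) (hmono : Monotone S) (a b : ℝ) (hab : a < b)
    (hf : ContinuousOn f (Set.Icc a b))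
    (hbdd : ∃ M, ∀ t ∈ Set.Icc a b, |f t| ≤ M)
    (hg : ∀ t ∈ Set.Icc a b, IsRSIntegral S f a t (g t))
    (t₀ : ℝ) (ht₀ : t₀ ∈ Set.Ioo a b) (h : NotLocallyConstantAt S t₀) :
    Filter.Tendsto (fun t => (g t - g t₀) / (S t - S t₀))
      (nhdsWithin t₀ {t | S t ≠ S t₀}) (nhds (f t₀)) :=
  fundamental_theorem_second_part_general S f g hmono a b hf hg t₀ ht₀
end

section
/- Let S : ℝ → ℝ be continuous and monotone nondecreasing, and k, m > 0, v₀, r₀ ∈ ℝ. Define r(t) = (k/(2m))·S(t)² + v₀·S(t) + r₀ and v(t) = (k/m)·S(t) + v₀. Then at every point t₀ where S is not locally constant, the F^α-derivative of r equals v(t₀), and the F^α-derivative of v equals k/m; hence m·(D_F^α)² r = k, i.e., r solves the generalized Newton equation with constant force k. -/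
/-! A function of the staircase, `φ ∘ S`, has `F^α`-derivative `φ'(S t₀)` (a chain rule): the
`F^α`-difference quotient of `φ ∘ S` is the slope of `φ` at `S t₀`, and by continuity of `S` the
points with `S t ≠ S t₀` are sent into a punctured neighbourhood of `S t₀`. Both `r` and `v` are
polynomials in `S`. -/

open Filter Topology

theorem HasDerivAt.fDerivAtS_comp {S φ : ℝ → ℝ} {t₀ φ' : ℝ} (hS : ContinuousAt S t₀)
    (hφ : HasDerivAt φ φ' (S t₀)) : FDerivAtS S (φ ∘ S) t₀ φ' := by
  have hS' : Tendsto S (𝓝[{t | S t ≠ S t₀}] t₀) (𝓝[≠] (S t₀)) :=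
    tendsto_nhdsWithin_of_tendsto_nhds_of_eventually_within _
      (hS.tendsto.mono_left nhdsWithin_le_nhds) self_mem_nhdsWithin
  refine ((hasDerivAt_iff_tendsto_slope.mp hφ).comp hS').congr fun t => ?_
  simp only [Function.comp_apply, slope_def_field]

theorem newton_constant_force_general (S : ℝ → ℝ) (hS : Continuous S)
    (k m v₀ r₀ : ℝ) (hm : 0 < m)
    (r v : ℝ → ℝ)
    (hr : ∀ t, r t = k / (2 * m) * (S t) ^ 2 + v₀ * S t + r₀)
    (hv : ∀ t, v t = k / m * S t + v₀)
    (t₀ : ℝ) :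
    FDerivAtS S r t₀ (v t₀) ∧ FDerivAtS S v t₀ (k / m) ∧ m * (k / m) = k := by
  rw [show r = _ from funext hr, show v = _ from funext hv]
  have hquad : HasDerivAt (fun x => k / (2 * m) * x ^ 2 + v₀ * x + r₀)
      (k / m * S t₀ + v₀) (S t₀) := by
    refine ((((hasDerivAt_pow 2 (S t₀)).const_mul (k / (2 * m))).fun_add
      ((hasDerivAt_id' (S t₀)).const_mul v₀)).add_const r₀).congr_deriv ?_
    push_cast
    ring
  have haffine : HasDerivAt (fun x => k / m * x + v₀) (k / m) (S t₀) := by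
    simpa using ((hasDerivAt_id' _).const_mul (k / m)).add_const v₀
  exact ⟨hquad.fDerivAtS_comp hS.continuousAt, haffine.fDerivAtS_comp hS.continuousAt,
    by field_simp⟩

theorem newton_constant_force (S : ℝ → ℝ) (hS : Continuous S) (hmono : Monotone S)
    (k m v₀ r₀ : ℝ) (hk : 0 < k) (hm : 0 < m)
    (r v : ℝ → ℝ)
    (hr : ∀ t, r t = k / (2 * m) * (S t) ^ 2 + v₀ * S t + r₀)
    (hv : ∀ t, v t = k / m * S t + v₀)
    (t₀ : ℝ) (h : NotLocallyConstantAt S t₀) :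
    FDerivAtS S r t₀ (v t₀) ∧ FDerivAtS S v t₀ (k / m) ∧ m * (k / m) = k :=
  newton_constant_force_general S hS k m v₀ r₀ hm r v hr hv t₀
end

section
/- Let S : ℝ → ℝ be continuous, strictly monotone increasing, and let ζ : ℝ → ℝ be continuous with ζ(0) = ζ₀, such that for all t₀ the F^α-derivative D_F^α ζ(t₀) = lim_{t→t₀} (ζ(t)−ζ(t₀))/(S(t)−S(t₀)) exists and equals −k·ζ(t₀). Then ζ(t) = ζ₀·exp(−k·(S(t) − S(0))) for all t. -/
/-!
The substitution `u = S t` turns the `F^α`-derivative of `ζ` into the ordinary derivative of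
`ζ ∘ S⁻¹` within the range of `S`, which is an interval because `S` is continuous. There
`ζ ∘ S⁻¹` solves `g' = -k g`, so `g u * exp (k u)` has zero derivative on an interval and is
constant.
-/

open Set Filter Function Topology

lemma StrictMono.nhdsWithin_range_diff_le_map {α β : Type*} [LinearOrder α] [TopologicalSpace α]
    [OrderTopology α] [NoMaxOrder α] [NoMinOrder α] [LinearOrder β] [TopologicalSpace β]
    [OrderTopology β] {S : α → β} (hS : StrictMono S) (t₀ : α) :
    𝓝[range S \ {S t₀}] (S t₀) ≤ map S (𝓝[≠] t₀) := by
  intro A hA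
  obtain ⟨V, hV, hVA⟩ := mem_nhdsWithin_iff_exists_mem_nhds_inter.1 (mem_map.1 hA)
  obtain ⟨a, b, hab, hVab⟩ := mem_nhds_iff_exists_Ioo_subset.1 hV
  refine mem_nhdsWithin_iff_exists_mem_nhds_inter.2
    ⟨Ioo (S a) (S b), Ioo_mem_nhds (hS hab.1) (hS hab.2), ?_⟩
  rintro _ ⟨⟨ha, hb⟩, ⟨t, rfl⟩, hne⟩
  exact hVA ⟨hVab ⟨hS.lt_iff_lt.1 ha, hS.lt_iff_lt.1 hb⟩, fun h => hne (congrArg S h)⟩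

lemma FDerivAtS.hasDerivWithinAt_comp_invFun {S f : ℝ → ℝ} {t₀ L : ℝ} (hS : StrictMono S)
    (hf : FDerivAtS S f t₀ L) : HasDerivWithinAt (f ∘ invFun S) L (range S) (S t₀) := by
  have hslope : slope (f ∘ invFun S) (S t₀) ∘ S = fun t => (f t - f t₀) / (S t - S t₀) := by
    funext t
    simp [slope_def_field, leftInverse_invFun hS.injective t,
      leftInverse_invFun hS.injective t₀]
  have hne : {t | S t ≠ S t₀} = {t₀}ᶜ := by
    ext t
    simp [hS.injective.ne_iff]
  rw [hasDerivWithinAt_iff_tendsto_slope]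
  refine Tendsto.mono_left ?_ (hS.nhdsWithin_range_diff_le_map t₀)
  rw [tendsto_map'_iff, hslope]
  simpa only [FDerivAtS, hne] using hf

lemma Convex.eq_of_hasDerivWithinAt_zero {s : Set ℝ} {f : ℝ → ℝ} (hs : Convex ℝ s)
    (hf : ∀ x ∈ s, HasDerivWithinAt f 0 s x) {x y : ℝ} (hx : x ∈ s) (hy : y ∈ s) :
    f x = f y := by
  have := hs.norm_image_sub_le_of_norm_hasDerivWithin_le hf (fun _ _ => norm_zero.le) hy hx
  rw [zero_mul, norm_le_zero_iff, sub_eq_zero] at this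
  exact this

lemma Convex.eq_mul_exp_of_hasDerivWithinAt {s : Set ℝ} {g : ℝ → ℝ} {c : ℝ} (hs : Convex ℝ s)
    (hg : ∀ u ∈ s, HasDerivWithinAt g (c * g u) s u) {u u₀ : ℝ} (hu : u ∈ s) (hu₀ : u₀ ∈ s) :
    g u = g u₀ * Real.exp (c * (u - u₀)) := by
  have hconst : ∀ v ∈ s, HasDerivWithinAt (fun v => g v * Real.exp (-c * v)) 0 s v := by
    intro v hv
    have hexp : HasDerivAt (fun v => Real.exp (-c * v)) (Real.exp (-c * v) * -c) v := by
      simpa using ((hasDerivAt_id v).const_mul (-c)).exp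
    exact ((hg v hv).mul hexp.hasDerivWithinAt).congr_deriv (by ring)
  have := hs.eq_of_hasDerivWithinAt_zero hconst hu hu₀
  have hsplit : Real.exp (c * (u - u₀)) = Real.exp (-c * u₀) / Real.exp (-c * u) := by
    rw [← Real.exp_sub]
    congr 1
    ring
  rw [hsplit, ← mul_div_assoc, ← this, mul_div_cancel_right₀ _ (Real.exp_ne_zero _)]

theorem absorption_uniqueness_general (S ζ : ℝ → ℝ) (hS : Continuous S) (hmono : StrictMono S)
    (ζ₀ k : ℝ) (hζ0 : ζ 0 = ζ₀)
    (hode : ∀ t₀ : ℝ, FDerivAtS S ζ t₀ (-k * ζ t₀)) :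
    ∀ t, ζ t = ζ₀ * Real.exp (-k * (S t - S 0)) := by
  have hinv : ∀ t, invFun S (S t) = t := leftInverse_invFun hmono.injective
  have hODE : ∀ u ∈ range S,
      HasDerivWithinAt (ζ ∘ invFun S) (-k * (ζ ∘ invFun S) u) (range S) u := by
    rintro _ ⟨t₀, rfl⟩
    simpa [hinv] using (hode t₀).hasDerivWithinAt_comp_invFun hmono
  intro t
  simpa [hinv, hζ0] using
    (isPreconnected_range hS).convex.eq_mul_exp_of_hasDerivWithinAt hODE
      (mem_range_self t) (mem_range_self 0)

theorem absorption_uniqueness (S ζ : ℝ → ℝ) (hS : Continuous S) (hmono : StrictMono S)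
    (hζ : Continuous ζ) (ζ₀ k : ℝ) (hζ0 : ζ 0 = ζ₀)
    (hode : ∀ t₀ : ℝ, FDerivAtS S ζ t₀ (-k * ζ t₀)) :
    ∀ t, ζ t = ζ₀ * Real.exp (-k * (S t - S 0)) :=
  absorption_uniqueness_general S ζ hS hmono ζ₀ k hζ0 hode
end
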